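/- arXiv:2503.01132 — 8 statements merged into one kernel-verified Lean document; each statement's English description precedes it below -/
import Mathlib

section
/- For every m ∈ (0,1), the function μ(m) = E(m)/K(m) is differentiable at m and satisfies the Riccati equation μ'(m) = (μ(m)² + 2(m−1)·μ(m) − (m−1)) / (2m(m−1)). -/
open Real

/-- Complete elliptic integral of the second kind with parameter `m`. -/
noncomputable def ellipticE (m : ℝ) : ℝ :=
  ∫ y in (0:ℝ)..(π / 2), Real.sqrt (1 - m * Real.sin y ^ 2)

/-- Complete elliptic integral of the first kind with parameter `m`. -/
noncomputable def ellipticK (m : ℝ) : ℝ :=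
  ∫ y in (0:ℝ)..(π / 2), 1 / Real.sqrt (1 - m * Real.sin y ^ 2)

/-!
`E` and `K` are the members `p = 1/2` and `p = -1/2` of the family
`J p m = ∫₀^{π/2} (1 - m sin² y)^p dy`. Differentiating under the integral sign and writing
`m sin² y = 1 - (1 - m sin² y)` gives `m · ∂ₘ J p = p (J p - J (p - 1))`. Integrating the
derivative of `sin y cos y (1 - m sin² y)^p` over `[0, π/2]` gives a three-term recurrence in `p`,
which at `p = -1/2` reads `(1 - m) J (-3/2) = E`. Hence `2m E' = E - K` and
`2m(1 - m) K' = E - (1 - m) K`, and the Riccati equation for `E / K` is the quotient rule.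
-/

open MeasureTheory Set Metric

theorem intervalIntegral.hasDerivAt_integral_of_continuousOn {E : Type*} [NormedAddCommGroup E]
    [NormedSpace ℝ E] {F F' : ℝ → ℝ → E} {U : Set ℝ} {x₀ a b : ℝ} (hU : IsOpen U)
    (hx₀ : x₀ ∈ U) (hF : ∀ x ∈ U, Continuous (F x))
    (hF' : ContinuousOn (Function.uncurry F') (U ×ˢ univ))
    (hderiv : ∀ x ∈ U, ∀ t, HasDerivAt (F · t) (F' x t) x) :
    HasDerivAt (fun x => ∫ t in a..b, F x t) (∫ t in a..b, F' x₀ t) x₀ := by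
  obtain ⟨ε, hε, hεU⟩ := nhds_basis_closedBall.mem_iff.1 (hU.mem_nhds hx₀)
  obtain ⟨C, hC⟩ :=
    ((isCompact_closedBall x₀ ε).prod isCompact_uIcc).exists_bound_of_continuousOn
      (hF'.mono (prod_mono hεU (subset_univ (uIcc a b))))
  have hF'₀ : Continuous (F' x₀) :=
    hF'.comp_continuous (continuous_const.prodMk continuous_id) fun _ => ⟨hx₀, trivial⟩
  refine (hasDerivAt_integral_of_dominated_loc_of_deriv_le (bound := fun _ => C)
    (ball_mem_nhds x₀ hε) ?_ ((hF x₀ hx₀).intervalIntegrable a b) hF'₀.aestronglyMeasurable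
    (ae_of_all _ fun t ht x hx => hC (x, t) ⟨ball_subset_closedBall hx, uIoc_subset_uIcc ht⟩)
    intervalIntegrable_const
    (ae_of_all _ fun t _ x hx => hderiv x (hεU (ball_subset_closedBall hx)) t)).2
  filter_upwards [hU.mem_nhds hx₀] with x hx using (hF x hx).aestronglyMeasurable

theorem one_div_sqrt_eq_rpow (x : ℝ) : 1 / √x = x ^ (-1 / 2 : ℝ) := by
  rcases le_or_gt 0 x with hx | hx
  · rw [neg_div, rpow_neg hx, sqrt_eq_rpow, one_div]
  · rw [sqrt_eq_zero'.2 hx.le, div_zero, rpow_def_of_neg hx, neg_div, neg_mul, cos_neg,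
      div_mul_eq_mul_div, one_mul, cos_pi_div_two, mul_zero]

noncomputable def ellipticJ (p m : ℝ) : ℝ :=
  ∫ y in (0:ℝ)..(π / 2), (1 - m * sin y ^ 2) ^ p

theorem ellipticE_eq_ellipticJ : ellipticE = ellipticJ (1 / 2) := by
  funext m
  simp only [ellipticE, ellipticJ, sqrt_eq_rpow]

theorem ellipticK_eq_ellipticJ : ellipticK = ellipticJ (-1 / 2) := by
  funext m
  simp only [ellipticK, ellipticJ, one_div_sqrt_eq_rpow]

section

variable {m : ℝ}

theorem one_sub_mul_sin_sq_pos (hm : m < 1) (y : ℝ) : 0 < 1 - m * sin y ^ 2 := by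
  rcases le_or_gt m 0 with h | h
  · nlinarith [sq_nonneg (sin y)]
  · nlinarith [sin_sq_le_one y]

theorem continuous_rpow_one_sub_mul_sin_sq (hm : m < 1) (p : ℝ) :
    Continuous fun y => (1 - m * sin y ^ 2) ^ p :=
  (by fun_prop : Continuous fun y => 1 - m * sin y ^ 2).rpow_const
    fun y => .inl (one_sub_mul_sin_sq_pos hm y).ne'

theorem intervalIntegrable_rpow_one_sub_mul_sin_sq (hm : m < 1) (p a b : ℝ) :
    IntervalIntegrable (fun y => (1 - m * sin y ^ 2) ^ p) volume a b :=
  (continuous_rpow_one_sub_mul_sin_sq hm p).intervalIntegrable a b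

theorem hasDerivAt_ellipticJ_integral (p : ℝ) (hm : m < 1) :
    HasDerivAt (ellipticJ p)
      (∫ y in (0:ℝ)..(π / 2), -(sin y ^ 2) * p * (1 - m * sin y ^ 2) ^ (p - 1)) m := by
  refine intervalIntegral.hasDerivAt_integral_of_continuousOn
    (F := fun s y => (1 - s * sin y ^ 2) ^ p)
    (F' := fun s y => -(sin y ^ 2) * p * (1 - s * sin y ^ 2) ^ (p - 1))
    isOpen_Iio hm (fun s hs => continuous_rpow_one_sub_mul_sin_sq hs p) ?_ fun s hs y => ?_
  · refine (by fun_prop : Continuous fun z : ℝ × ℝ => -(sin z.2 ^ 2) * p).continuousOn.mul ?_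
    exact (by fun_prop : Continuous fun z : ℝ × ℝ => 1 - z.1 * sin z.2 ^ 2).continuousOn
      |>.rpow_const fun z hz => .inl (one_sub_mul_sin_sq_pos hz.1 _).ne'
  · simpa using (((hasDerivAt_id s).mul_const (sin y ^ 2)).const_sub 1).rpow_const
      (p := p) (.inl (one_sub_mul_sin_sq_pos hs y).ne')

theorem hasDerivAt_ellipticJ (p : ℝ) (hm : m < 1) (hm₀ : m ≠ 0) :
    HasDerivAt (ellipticJ p) (p * (ellipticJ p m - ellipticJ (p - 1) m) / m) m := by
  convert hasDerivAt_ellipticJ_integral p hm using 1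
  rw [ellipticJ, ellipticJ, ← intervalIntegral.integral_sub
    (intervalIntegrable_rpow_one_sub_mul_sin_sq hm _ _ _)
    (intervalIntegrable_rpow_one_sub_mul_sin_sq hm _ _ _), ← intervalIntegral.integral_const_mul,
    ← intervalIntegral.integral_div]
  refine intervalIntegral.integral_congr fun y _ => ?_
  have hw := (one_sub_mul_sin_sq_pos hm y).ne'
  simp only [rpow_sub_one hw]
  field_simp
  ring

theorem ellipticJ_recurrence (p : ℝ) (hm : m < 1) :
    2 * (p + 1) * ellipticJ (p + 1) m
      = 2 * p * (m - 1) * ellipticJ (p - 1) m + (2 - m) * (2 * p + 1) * ellipticJ p m := by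
  have hw y : 1 - m * sin y ^ 2 ≠ 0 := (one_sub_mul_sin_sq_pos hm y).ne'
  have hcont := continuous_rpow_one_sub_mul_sin_sq hm
  have hderiv y : HasDerivAt (fun y => sin y * cos y * (1 - m * sin y ^ 2) ^ p)
      ((cos y ^ 2 - sin y ^ 2) * (1 - m * sin y ^ 2) ^ p
        - 2 * p * m * sin y ^ 2 * cos y ^ 2 * (1 - m * sin y ^ 2) ^ (p - 1)) y :=
    (((hasDerivAt_sin y).mul (hasDerivAt_cos y)).mul
      ((((hasDerivAt_sin y).pow 2).const_mul m).const_sub 1 |>.rpow_const (p := p) (.inl (hw y))))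
      |>.congr_deriv (by simp only [Pi.mul_apply, Pi.pow_apply]; ring)
  -- `sin y cos y` vanishes at both ends of `[0, π/2]`
  have hzero := intervalIntegral.integral_eq_sub_of_hasDerivAt (fun y _ => hderiv y)
    (Continuous.intervalIntegrable (by have := hcont p; have := hcont (p - 1); fun_prop) 0 (π / 2))
  simp only [sin_pi_div_two, cos_pi_div_two, sin_zero, mul_zero, zero_mul, sub_self] at hzero
  have key y : m * ((cos y ^ 2 - sin y ^ 2) * (1 - m * sin y ^ 2) ^ p
        - 2 * p * m * sin y ^ 2 * cos y ^ 2 * (1 - m * sin y ^ 2) ^ (p - 1))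
      = 2 * (p + 1) * (1 - m * sin y ^ 2) ^ (p + 1)
        - 2 * p * (m - 1) * (1 - m * sin y ^ 2) ^ (p - 1)
        - (2 - m) * (2 * p + 1) * (1 - m * sin y ^ 2) ^ p := by
    have hp : (1 - m * sin y ^ 2) ^ p = (1 - m * sin y ^ 2) ^ (p - 1) * (1 - m * sin y ^ 2) := by
      rw [← rpow_add_one (hw y), sub_add_cancel]
    rw [rpow_add_one (hw y), hp]
    linear_combination m * (1 - m * sin y ^ 2) ^ (p - 1) * (1 - (2 * p + 1) * m * sin y ^ 2)
      * sin_sq_add_cos_sq y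
  have hcombo := congrArg (m * ·) hzero
  simp only [mul_zero, ← intervalIntegral.integral_const_mul, key] at hcombo
  rw [intervalIntegral.integral_sub, intervalIntegral.integral_sub,
    intervalIntegral.integral_const_mul, intervalIntegral.integral_const_mul,
    intervalIntegral.integral_const_mul] at hcombo
  · unfold ellipticJ
    linarith
  all_goals
    refine Continuous.intervalIntegrable ?_ _ _
    have := hcont p
    have := hcont (p - 1)
    have := hcont (p + 1)
    fun_prop

theorem one_sub_mul_ellipticJ_neg_three_halves (hm : m < 1) :
    (1 - m) * ellipticJ (-3 / 2) m = ellipticE m := by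
  have h := ellipticJ_recurrence (-1 / 2) hm
  rw [ellipticE_eq_ellipticJ]
  norm_num at h
  linarith

theorem ellipticK_pos (hm : m < 1) : 0 < ellipticK m := by
  rw [ellipticK_eq_ellipticJ]
  exact intervalIntegral.intervalIntegral_pos_of_pos
    (intervalIntegrable_rpow_one_sub_mul_sin_sq hm _ _ _)
    (fun y => rpow_pos_of_pos (one_sub_mul_sin_sq_pos hm y) _) (by positivity)

theorem hasDerivAt_ellipticE (hm : m < 1) (hm₀ : m ≠ 0) :
    HasDerivAt ellipticE ((ellipticE m - ellipticK m) / (2 * m)) m := by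
  rw [ellipticE_eq_ellipticJ, ellipticK_eq_ellipticJ]
  convert hasDerivAt_ellipticJ (1 / 2) hm hm₀ using 1
  norm_num
  ring

theorem hasDerivAt_ellipticK (hm : m < 1) (hm₀ : m ≠ 0) :
    HasDerivAt ellipticK ((ellipticE m - (1 - m) * ellipticK m) / (2 * m * (1 - m))) m := by
  rw [← one_sub_mul_ellipticJ_neg_three_halves hm, ellipticK_eq_ellipticJ]
  convert hasDerivAt_ellipticJ (-1 / 2) hm hm₀ using 1
  have : 1 - m ≠ 0 := by linarith
  norm_num
  field_simp
  ring

end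

/-- For every `m ∈ (0,1)`, the function `μ(m) = E(m)/K(m)` is differentiable at `m`
and satisfies the Riccati equation
`μ'(m) = (μ(m)² + 2(m−1)μ(m) − (m−1)) / (2m(m−1))`. -/
theorem mu_riccati (m : ℝ) (hm : m ∈ Set.Ioo (0:ℝ) 1) :
    HasDerivAt (fun s => ellipticE s / ellipticK s)
      (((ellipticE m / ellipticK m) ^ 2 + 2 * (m - 1) * (ellipticE m / ellipticK m)
          - (m - 1)) / (2 * m * (m - 1))) m := by
  obtain ⟨hm₀, hm₁⟩ := hm
  refine ((hasDerivAt_ellipticE hm₁ hm₀.ne').div (hasDerivAt_ellipticK hm₁ hm₀.ne')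
    (ellipticK_pos hm₁).ne').congr_deriv ?_
  have : m - 1 ≠ 0 := by linarith
  have : 1 - m ≠ 0 := by linarith
  have := (ellipticK_pos hm₁).ne'
  field_simp
  ring
end

section
/- Let (a_j)_{j≥0} be the real sequence defined by a₀ = 1, a₁ = −1/2, and for j ≥ 2 by the recursion −2j·a_j = (4 − 2j)·a_{j−1} + Σ_{k=1}^{j−1} a_k·a_{j−k}. Then a_j < 0 for every j ≥ 1. -/
/-- Let `(a_j)` satisfy `a₀ = 1`, `a₁ = −1/2`, and for `j ≥ 2`
`−2j·a_j = (4 − 2j)·a_{j−1} + Σ_{k=1}^{j−1} a_k·a_{j−k}`. Then `a_j < 0` for every `j ≥ 1`. -/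
theorem coeffs_negative (a : ℕ → ℝ)
    (h0 : a 0 = 1) (h1 : a 1 = -1/2)
    (hrec : ∀ j : ℕ, 2 ≤ j →
      -(2 * (j : ℝ)) * a j = (4 - 2 * (j : ℝ)) * a (j - 1)
        + ∑ k ∈ Finset.Ico 1 j, a k * a (j - k)) :
    ∀ j : ℕ, 1 ≤ j → a j < 0 := by
  intro j
  induction j using Nat.strong_induction_on with
  | _ j ih =>
    intro hj
    match j, hj with
    | 1, _ => rw [h1]; norm_num
    | (n+2), _ =>
      have hrec' := hrec (n+2) (by omega)
      push_cast at hrec'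
      have hsum : 0 < ∑ k ∈ Finset.Ico 1 (n+2), a k * a (n+2-k) := by
        apply Finset.sum_pos
        · intro k hk
          simp only [Finset.mem_Ico] at hk
          have h1k : a k < 0 := ih k (by omega) (by omega)
          have h2k : a (n+2-k) < 0 := ih (n+2-k) (by omega) (by omega)
          exact mul_pos_of_neg_of_neg h1k h2k
        · exact ⟨1, by simp⟩
      have hterm : 0 ≤ (4 - 2 * ((n:ℝ)+2)) * a (n+1) := by
        rcases Nat.eq_zero_or_pos n with h|h
        · subst h; norm_num
        · have ha : a (n+1) < 0 := ih (n+1) (by omega) (by omega)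
          have hc : (4 - 2 * ((n:ℝ)+2)) ≤ 0 := by
            have : (1:ℝ) ≤ (n:ℝ) := by exact_mod_cast h
            linarith
          nlinarith
      have hpos : (0:ℝ) < 2*((n:ℝ)+2) := by positivity
      nlinarith [hrec', hterm, hsum]
end

section
/- Let (a_j)_{j≥0} be the real sequence defined by a₀ = 1, a₁ = −1/2, and for j ≥ 2 by the recursion −2j·a_j = (4 − 2j)·a_{j−1} + Σ_{k=1}^{j−1} a_k·a_{j−k}. Then for every j ≥ 2 one has −a_j ≥ 1/(8·j·(j−1)), i.e. setting b_j = −a_j, it holds that b_j ≥ (1/8)·(1/(j−1) − 1/j). -/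
/-! With `b_j = -a_j` the recursion reads `2j·b_j = (2j-4)·b_{j-1} + Σ_{k=1}^{j-1} b_k·b_{j-k}`.
By induction all `b_k` with `k ≥ 1` are nonnegative, so the convolution sum is at least its two
end terms `2·b_1·b_{j-1} = b_{j-1}`, giving `2j·b_j ≥ (2j-3)·b_{j-1}`. Since
`(2j-3)/(j-2) ≥ 2`, this propagates the bound `1/(8j(j-1))` from `j-1` to `j`; the base case is
`b_2 = b_1²/4 = 1/16`. -/

open Finset

lemma two_mul_mul_le_sum_Ico_mul {b : ℕ → ℝ} {j : ℕ} (hj : 3 ≤ j)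
    (hb : ∀ k ∈ Ico 1 j, 0 ≤ b k) :
    2 * (b 1 * b (j - 1)) ≤ ∑ k ∈ Ico 1 j, b k * b (j - k) := by
  have hsub : ({1, j - 1} : Finset ℕ) ⊆ Ico 1 j := by
    intro k hk
    simp only [mem_insert, mem_singleton] at hk
    simp only [mem_Ico]
    omega
  have hends : ∑ k ∈ ({1, j - 1} : Finset ℕ), b k * b (j - k) = 2 * (b 1 * b (j - 1)) := by
    rw [sum_pair (by omega), Nat.sub_sub_self (by omega)]
    ring
  rw [← hends]
  refine sum_le_sum_of_subset_of_nonneg hsub fun k hk _ => mul_nonneg (hb k hk) (hb _ ?_)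
  simp only [mem_Ico] at hk ⊢
  omega

lemma one_div_le_of_two_mul_ge {n c x : ℝ} (hn : 3 ≤ n)
    (hc : 1 / (8 * (n - 1) * (n - 1 - 1)) ≤ c) (hx : (2 * n - 3) * c ≤ 2 * n * x) :
    1 / (8 * n * (n - 1)) ≤ x := by
  have hden : 0 < 8 * (n - 1) * (n - 1 - 1) := by nlinarith
  have hc0 : 0 ≤ c := (div_nonneg zero_le_one hden.le).trans hc
  have hc' : 1 ≤ 8 * (n - 1) * (n - 2) * c := by
    rw [div_le_iff₀ hden] at hc
    linarith
  rw [div_le_iff₀ (by nlinarith)]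
  nlinarith [mul_le_mul_of_nonneg_left hx (by linarith : (0 : ℝ) ≤ 4 * (n - 1)),
    mul_nonneg hc0 (by linarith : (0 : ℝ) ≤ n - 1)]

section

variable {b : ℕ → ℝ} (hb1 : b 1 = 1 / 2)
  (hrec : ∀ j : ℕ, 2 ≤ j →
    2 * (j : ℝ) * b j = (2 * j - 4) * b (j - 1) + ∑ k ∈ Ico 1 j, b k * b (j - k))
include hb1 hrec

lemma le_two_mul_of_rec {j : ℕ} (hj : 3 ≤ j) (hb : ∀ k ∈ Ico 1 j, 0 ≤ b k) :
    (2 * j - 3) * b (j - 1) ≤ 2 * j * b j := by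
  have hsum := two_mul_mul_le_sum_Ico_mul hj hb
  rw [hb1] at hsum
  linarith [hrec j (by omega)]

theorem one_div_le_of_rec : ∀ j : ℕ, 2 ≤ j → 1 / (8 * (j : ℝ) * (j - 1)) ≤ b j := by
  intro j
  induction j using Nat.strong_induction_on with
  | _ j ih =>
  intro hj
  rcases hj.eq_or_lt with rfl | hj3
  · have h2 := hrec 2 le_rfl
    simp only [show Ico 1 2 = {1} from rfl, sum_singleton, hb1] at h2
    norm_num at h2 ⊢
    linarith
  have hnonneg : ∀ k ∈ Ico 1 j, 0 ≤ b k := by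
    intro k hk
    rw [mem_Ico] at hk
    rcases hk.1.eq_or_lt with rfl | hk2
    · rw [hb1]; norm_num
    · have hk2' : (2 : ℝ) ≤ k := by exact_mod_cast hk2
      have hden : (0 : ℝ) < 8 * k * (k - 1) := by nlinarith
      exact (one_div_pos.mpr hden).le.trans (ih k hk.2 hk2)
  have hprev := ih (j - 1) (by omega) (by omega)
  rw [Nat.cast_sub (by omega), Nat.cast_one] at hprev
  exact one_div_le_of_two_mul_ge (by exact_mod_cast hj3) hprev
    (le_two_mul_of_rec hb1 hrec hj3 hnonneg)

end

theorem coeffs_lower_bound_general (a : ℕ → ℝ)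
    (h1 : a 1 = -1/2)
    (hrec : ∀ j : ℕ, 2 ≤ j →
      -(2 * (j : ℝ)) * a j = (4 - 2 * (j : ℝ)) * a (j - 1)
        + ∑ k ∈ Finset.Ico 1 j, a k * a (j - k)) :
    ∀ j : ℕ, 2 ≤ j → -a j ≥ 1 / (8 * (j : ℝ) * ((j : ℝ) - 1)) := by
  refine one_div_le_of_rec (b := fun j => -a j) (by norm_num [h1]) fun j hj => ?_
  simp only [neg_mul_neg]
  linarith [hrec j hj]

/-- Let `(a_j)` satisfy `a₀ = 1`, `a₁ = −1/2`, and for `j ≥ 2`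
`−2j·a_j = (4 − 2j)·a_{j−1} + Σ_{k=1}^{j−1} a_k·a_{j−k}`. Then for every `j ≥ 2`,
`−a_j ≥ 1/(8·j·(j−1))`, i.e. with `b_j = −a_j`, `b_j ≥ (1/8)(1/(j−1) − 1/j)`. -/
theorem coeffs_lower_bound (a : ℕ → ℝ)
    (h0 : a 0 = 1) (h1 : a 1 = -1/2)
    (hrec : ∀ j : ℕ, 2 ≤ j →
      -(2 * (j : ℝ)) * a j = (4 - 2 * (j : ℝ)) * a (j - 1)
        + ∑ k ∈ Finset.Ico 1 j, a k * a (j - k)) :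
    ∀ j : ℕ, 2 ≤ j → -a j ≥ 1 / (8 * (j : ℝ) * ((j : ℝ) - 1)) :=
  coeffs_lower_bound_general a h1 hrec
end

section
/- Let (k_j)_{j≥0} be a real sequence with k₀ = 1, k_j ≥ 0 for all j ≥ 1, such that the series Σ_{j≥1} k_j·(1/2)^j converges with sum strictly less than 1. Define the sequence (k̃_n)_{n≥0} recursively by k̃₀ = 1 and k̃_n = −Σ_{j=1}^{n} k_j·k̃_{n−j} for n ≥ 1. Then |k̃_n| ≤ 2^n for every n ≥ 0. -/
/-- Let `(k_j)` with `k₀ = 1`, `k_j ≥ 0` for `j ≥ 1`, and suppose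
`Σ_{j≥1} k_j (1/2)^j` converges with sum `< 1`. Define `k̃₀ = 1` and
`k̃_n = −Σ_{j=1}^n k_j k̃_{n−j}` for `n ≥ 1`. Then `|k̃_n| ≤ 2^n` for all `n`. -/
theorem reciprocal_coeff_bound (k kt : ℕ → ℝ)
    (hk0 : k 0 = 1) (hknn : ∀ j : ℕ, 1 ≤ j → 0 ≤ k j)
    (hsum : Summable (fun j : ℕ => k (j + 1) * (1/2 : ℝ) ^ (j + 1)))
    (hlt : (∑' j : ℕ, k (j + 1) * (1/2 : ℝ) ^ (j + 1)) < 1)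
    (hkt0 : kt 0 = 1)
    (hktrec : ∀ n : ℕ, 1 ≤ n → kt n = -∑ j ∈ Finset.Icc 1 n, k j * kt (n - j)) :
    ∀ n : ℕ, |kt n| ≤ 2 ^ n := by
  have hterm : ∀ j : ℕ, 0 ≤ k (j + 1) * (1/2 : ℝ) ^ (j + 1) := fun j =>
    mul_nonneg (hknn _ (by omega)) (by positivity)
  intro n
  induction n using Nat.strong_induction_on with
  | _ n ih =>
    match n with
    | 0 => simp [hkt0]
    | Nat.succ m =>
      set n := m + 1 with hn
      rw [hktrec n (by omega), abs_neg]
      calc |∑ j ∈ Finset.Icc 1 n, k j * kt (n - j)|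
          ≤ ∑ j ∈ Finset.Icc 1 n, k j * 2 ^ (n - j) := by
            refine (Finset.abs_sum_le_sum_abs _ _).trans (Finset.sum_le_sum fun j hj => ?_)
            rw [Finset.mem_Icc] at hj
            rw [abs_mul, abs_of_nonneg (hknn j hj.1)]
            exact mul_le_mul_of_nonneg_left (ih (n - j) (by omega)) (hknn j hj.1)
        _ = 2 ^ n * ∑ i ∈ Finset.range n, k (i + 1) * (1/2 : ℝ) ^ (i + 1) := by
            rw [show Finset.Icc 1 n = Finset.Ico 1 (n+1) by rfl, Finset.sum_Ico_eq_sum_range,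
              Finset.mul_sum]
            simp only [Nat.add_sub_cancel]
            refine Finset.sum_congr rfl fun i hi => ?_
            rw [Finset.mem_range] at hi
            have h1 : (n - (1 + i)) + (1 + i) = n := by omega
            have h2 : (2 : ℝ) ^ (1 + i) * (1/2 : ℝ) ^ (1 + i) = 1 := by
              rw [← mul_pow]; norm_num
            have hpow : (2:ℝ) ^ (n - (1 + i)) = 2 ^ n * (1/2 : ℝ) ^ (1 + i) := by
              have h3 : (2:ℝ) ^ n = 2 ^ (n - (1 + i)) * 2 ^ (1 + i) := by rw [← pow_add, h1]
              rw [h3, mul_assoc, h2, mul_one]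
            rw [hpow, add_comm 1 i]; ring
        _ ≤ 2 ^ n * 1 := by
            refine mul_le_mul_of_nonneg_left ?_ (by positivity)
            exact le_of_lt (lt_of_le_of_lt
              (Summable.sum_le_tsum (Finset.range n) (fun i _ => hterm i) hsum) hlt)
        _ = 2 ^ n := mul_one _
end

section
/- For all real numbers q₊, q₋ with −1 < q₊ < q₋ < 1, the velocities V₂₊ = (8q₊² − 4q₊q₋ − q₋² − 4q₊ + 2q₋ − 1)/(2q₊ − q₋ − 1) and V₂₋ = 1 + 2q₋ + q₊ satisfy V₂₊ < V₂₋. (Note that the denominator 2q₊ − q₋ − 1 is strictly negative under these hypotheses.) -/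
/-- For all `−1 < q₊ < q₋ < 1`, the leading and trailing edge velocities
`V₂₊ = (8q₊² − 4q₊q₋ − q₋² − 4q₊ + 2q₋ − 1)/(2q₊ − q₋ − 1)` and `V₂₋ = 1 + 2q₋ + q₊`
satisfy `V₂₊ < V₂₋` (note `2q₊ − q₋ − 1 < 0` under these hypotheses). -/
theorem edge_velocities_order (qp qm : ℝ) (h1 : -1 < qp) (h2 : qp < qm) (h3 : qm < 1) :
    2 * qp - qm - 1 < 0 ∧
    (8 * qp ^ 2 - 4 * qp * qm - qm ^ 2 - 4 * qp + 2 * qm - 1) / (2 * qp - qm - 1)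
      < 1 + 2 * qm + qp := by
  have hd : 2 * qp - qm - 1 < 0 := by linarith
  refine ⟨hd, ?_⟩
  rw [div_lt_iff_of_neg hd]
  nlinarith [sq_nonneg (qm - qp), sq_nonneg (qm + qp), mul_pos (sub_pos.mpr h2) (sub_pos.mpr h2)]
end

section
/- Let T > 0 and let f : ℝ → ℝ be measurable, nonnegative on [0,T], integrable on [0,T], with ∫₀^T f(x) dx > 0. Then the function g(b) = T·(∫₀^T (f(x)+b)² dx) / (∫₀^T (f(x)+b) dx)² is antitone (nonincreasing) on [0, ∞): for all 0 ≤ b₁ ≤ b₂ one has g(b₂) ≤ g(b₁). -/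
/-!
Expanding the square, `m ∫ (f + b)² - (∫ (f + b))²` with `m = μ(univ)` does not depend on `b`,
so the kurtosis of `f + b` is `1 + (m ∫ f² - (∫ f)²) / (∫ f + b m)²`. The numerator is nonnegative
(Cauchy–Schwarz, obtained from the same identity at the shift making `∫ (f + b) = 0`), and the
denominator grows with `b ≥ 0` when `∫ f > 0`. If `f ∉ L²`, then `∫ (f + b)² = 0` by convention
and the kurtosis is identically `0`.
-/

open MeasureTheory Set

/-- For `f = |ψ|²` this is the kurtosis `μ(univ) ∫ |ψ|⁴ / (∫ |ψ|²)²` of `ψ`. -/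
noncomputable def kurtosis {α : Type*} [MeasurableSpace α] (μ : Measure α) (f : α → ℝ) : ℝ :=
  μ.real univ * (∫ x, f x ^ 2 ∂μ) / (∫ x, f x ∂μ) ^ 2

section

variable {α : Type*} [MeasurableSpace α] {μ : Measure α} {f : α → ℝ}

theorem integral_add_const [IsFiniteMeasure μ] (hf : Integrable f μ) (b : ℝ) :
    ∫ x, (f x + b) ∂μ = ∫ x, f x ∂μ + b * μ.real univ := by
  rw [integral_add hf (integrable_const b), integral_const, smul_eq_mul, mul_comm]

theorem integral_add_const_sq [IsFiniteMeasure μ] (hf : MemLp f 2 μ) (b : ℝ) :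
    ∫ x, (f x + b) ^ 2 ∂μ = ∫ x, f x ^ 2 ∂μ + 2 * b * ∫ x, f x ∂μ + b ^ 2 * μ.real univ := by
  have hf1 : Integrable f μ := hf.integrable one_le_two
  have hf2 : Integrable (fun x => f x ^ 2) μ := hf.integrable_sq
  have hlin : Integrable (fun x => 2 * f x * b) μ := (hf1.const_mul 2).mul_const b
  simp only [add_sq]
  rw [integral_add (hf2.fun_add hlin) (integrable_const _), integral_add hf2 hlin,
    integral_mul_const, integral_const_mul, integral_const, smul_eq_mul]
  ring

theorem measureReal_mul_integral_add_const_sq_sub_sq [IsFiniteMeasure μ] (hf : MemLp f 2 μ)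
    (b : ℝ) :
    μ.real univ * ∫ x, (f x + b) ^ 2 ∂μ - (∫ x, (f x + b) ∂μ) ^ 2 =
      μ.real univ * ∫ x, f x ^ 2 ∂μ - (∫ x, f x ∂μ) ^ 2 := by
  rw [integral_add_const_sq hf, integral_add_const (hf.integrable one_le_two)]
  ring

theorem sq_integral_le_measureReal_mul_integral_sq [IsFiniteMeasure μ] (hf : MemLp f 2 μ) :
    (∫ x, f x ∂μ) ^ 2 ≤ μ.real univ * ∫ x, f x ^ 2 ∂μ := by
  rcases eq_zero_or_neZero μ with rfl | _
  · simp
  set c := -(∫ x, f x ∂μ) / μ.real univ with hc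
  have hcentred : ∫ x, (f x + c) ∂μ = 0 := by
    rw [integral_add_const (hf.integrable one_le_two), hc,
      div_mul_cancel₀ _ measureReal_univ_pos.ne', add_neg_cancel]
  have hshift := measureReal_mul_integral_add_const_sq_sub_sq hf c
  have hsq : 0 ≤ ∫ x, (f x + c) ^ 2 ∂μ := integral_nonneg fun x => sq_nonneg _
  rw [hcentred] at hshift
  nlinarith [measureReal_univ_pos (μ := μ)]

theorem kurtosis_add_const [IsFiniteMeasure μ] (hf : MemLp f 2 μ) {b : ℝ}
    (hb : ∫ x, f x ∂μ + b * μ.real univ ≠ 0) :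
    kurtosis μ (fun x => f x + b) = 1 +
      (μ.real univ * ∫ x, f x ^ 2 ∂μ - (∫ x, f x ∂μ) ^ 2) / (∫ x, f x ∂μ + b * μ.real univ) ^ 2 := by
  rw [← integral_add_const (hf.integrable one_le_two)] at hb ⊢
  rw [← measureReal_mul_integral_add_const_sq_sub_sq hf b, kurtosis]
  field_simp
  ring

theorem kurtosis_eq_zero_of_not_memLp (hf : AEStronglyMeasurable f μ) (h : ¬MemLp f 2 μ) :
    kurtosis μ f = 0 := by
  rw [kurtosis, integral_undef fun h2 => h ((memLp_two_iff_integrable_sq hf).2 h2)]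
  simp

theorem antitoneOn_kurtosis_add_const [IsFiniteMeasure μ] (hf : 0 < ∫ x, f x ∂μ) :
    AntitoneOn (fun b => kurtosis μ (fun x => f x + b)) (Ici 0) := by
  have hf1 : Integrable f μ := Integrable.of_integral_ne_zero hf.ne'
  by_cases hf2 : MemLp f 2 μ
  · have hpos : ∀ b ∈ Ici (0 : ℝ), 0 < ∫ x, f x ∂μ + b * μ.real univ := fun b hb =>
      add_pos_of_pos_of_nonneg hf (mul_nonneg hb measureReal_nonneg)
    intro b₁ hb₁ b₂ _ hb
    have hL₁ := hpos b₁ hb₁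
    have hCS := sq_integral_le_measureReal_mul_integral_sq hf2
    dsimp only
    rw [kurtosis_add_const hf2 hL₁.ne', kurtosis_add_const hf2 (hpos b₂ (le_trans hb₁ hb)).ne']
    gcongr
  · have hzero : (fun b => kurtosis μ (fun x => f x + b)) = fun _ => 0 := funext fun b =>
      kurtosis_eq_zero_of_not_memLp (hf1.aestronglyMeasurable.add_const b) fun h =>
        hf2 (by simpa [Pi.sub_def] using h.sub (memLp_const b))
    rw [hzero]
    exact antitoneOn_const

end

theorem kurtosis_antitone_in_shift_general (T : ℝ) (hT : 0 < T) (f : ℝ → ℝ)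
    (hpos : 0 < ∫ x in (0:ℝ)..T, f x) :
    ∀ b₁ b₂ : ℝ, 0 ≤ b₁ → b₁ ≤ b₂ →
      T * (∫ x in (0:ℝ)..T, (f x + b₂) ^ 2) / (∫ x in (0:ℝ)..T, (f x + b₂)) ^ 2
        ≤ T * (∫ x in (0:ℝ)..T, (f x + b₁) ^ 2) / (∫ x in (0:ℝ)..T, (f x + b₁)) ^ 2 := by
  have hkurtosis : ∀ b : ℝ,
      T * (∫ x in (0:ℝ)..T, (f x + b) ^ 2) / (∫ x in (0:ℝ)..T, (f x + b)) ^ 2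
        = kurtosis (volume.restrict (Ioc 0 T)) (fun x => f x + b) := fun b => by
    rw [kurtosis, measureReal_restrict_apply_univ, Real.volume_real_Ioc_of_le hT.le, sub_zero,
      intervalIntegral.integral_of_le hT.le, intervalIntegral.integral_of_le hT.le]
  rw [intervalIntegral.integral_of_le hT.le] at hpos
  intro b₁ b₂ hb₁ hb
  rw [hkurtosis, hkurtosis]
  exact antitoneOn_kurtosis_add_const hpos hb₁ (le_trans hb₁ hb) hb

/-- Let `T > 0` and `f : ℝ → ℝ` be measurable, nonnegative on `[0,T]`, integrable on
`[0,T]`, with `∫₀^T f > 0`. Then `g(b) = T·(∫₀^T (f+b)²)/(∫₀^T (f+b))²` is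
nonincreasing on `[0, ∞)`. -/
theorem kurtosis_antitone_in_shift (T : ℝ) (hT : 0 < T) (f : ℝ → ℝ)
    (hmeas : Measurable f)
    (hnonneg : ∀ x ∈ Set.Icc 0 T, 0 ≤ f x)
    (hint : IntegrableOn f (Set.Icc 0 T))
    (hpos : 0 < ∫ x in (0:ℝ)..T, f x) :
    ∀ b₁ b₂ : ℝ, 0 ≤ b₁ → b₁ ≤ b₂ →
      T * (∫ x in (0:ℝ)..T, (f x + b₂) ^ 2) / (∫ x in (0:ℝ)..T, (f x + b₂)) ^ 2
        ≤ T * (∫ x in (0:ℝ)..T, (f x + b₁) ^ 2) / (∫ x in (0:ℝ)..T, (f x + b₁)) ^ 2 :=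
  kurtosis_antitone_in_shift_general T hT f hpos
end

section
/- Let Γ ⊆ (−1,1) be a measurable set, let u, σ : ℝ → ℝ, and suppose that for every z ∈ Γ the function w ↦ log((√(1−z²)·√(1−w²) + 1 − z·w)/|z−w|)·u(w) is integrable over Γ. Define Z(z) = z + i·√(1−z²). Then for every z ∈ Γ the equation ∫_Γ log((√(1−z²)·√(1−w²) + 1 − z·w)/|z−w|)·u(w) dw + σ(z)·u(z) = √(1−z²) holds if and only if the equation ∫_Γ log( |Z(z) − conj(Z(w))| / |Z(z) − Z(w)| )·u(w) dw + σ(z)·u(z) = Im(Z(z)) holds. -/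
open MeasureTheory Complex

/-!
For `z, w ∈ (-1, 1)` write `a = √(1-z²)`, `b = √(1-w²)`, `P = ab + 1 - zw` and `Q = 1 - zw - ab`.
Since `Zmap z`, `Zmap w` lie on the unit circle, `|Zmap z - conj (Zmap w)|² = 2P` and
`|Zmap z - Zmap w|² = 2Q`, while `PQ = (z - w)²`. Hence the ratio of the two distances is
`√(P / Q) = P / |z - w|` (at `z = w` both sides are `0`, by the convention `x / 0 = 0`), so the two kernels, and with them the two integral equations, coincide
pointwise on `(-1, 1)`.
-/

/-- The inverse Joukovski map `z ↦ z + i√(1−z²)` onto the upper unit semicircle. -/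
noncomputable def Zmap (z : ℝ) : ℂ := z + Complex.I * Real.sqrt (1 - z ^ 2)

lemma Zmap_im (z : ℝ) : (Zmap z).im = Real.sqrt (1 - z ^ 2) := by
  simp [Zmap]

lemma norm_Zmap_sub_conj_Zmap {z w : ℝ} (hz : z ^ 2 ≤ 1) (hw : w ^ 2 ≤ 1) :
    ‖Zmap z - (starRingEnd ℂ) (Zmap w)‖
      = Real.sqrt (2 * (Real.sqrt (1 - z ^ 2) * Real.sqrt (1 - w ^ 2) + 1 - z * w)) := by
  rw [Complex.norm_def, Complex.normSq_apply]
  congr 1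
  simp only [Zmap, sub_re, sub_im, conj_re, conj_im, add_re, add_im, ofReal_re, ofReal_im,
    mul_re, mul_im, I_re, I_im]
  nlinarith [Real.sq_sqrt (sub_nonneg.2 hz), Real.sq_sqrt (sub_nonneg.2 hw)]

lemma norm_Zmap_sub_Zmap {z w : ℝ} (hz : z ^ 2 ≤ 1) (hw : w ^ 2 ≤ 1) :
    ‖Zmap z - Zmap w‖
      = Real.sqrt (2 * (1 - z * w - Real.sqrt (1 - z ^ 2) * Real.sqrt (1 - w ^ 2))) := by
  rw [Complex.norm_def, Complex.normSq_apply]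
  congr 1
  simp only [Zmap, sub_re, sub_im, add_re, add_im, ofReal_re, ofReal_im,
    mul_re, mul_im, I_re, I_im]
  nlinarith [Real.sq_sqrt (sub_nonneg.2 hz), Real.sq_sqrt (sub_nonneg.2 hw)]

lemma norm_Zmap_sub_conj_div_norm_Zmap_sub {z w : ℝ}
    (hz : z ∈ Set.Ioo (-1 : ℝ) 1) (hw : w ∈ Set.Ioo (-1 : ℝ) 1) :
    ‖Zmap z - (starRingEnd ℂ) (Zmap w)‖ / ‖Zmap z - Zmap w‖
      = (Real.sqrt (1 - z ^ 2) * Real.sqrt (1 - w ^ 2) + 1 - z * w) / |z - w| := by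
  have hz2 : z ^ 2 ≤ 1 := by nlinarith [hz.1, hz.2]
  have hw2 : w ^ 2 ≤ 1 := by nlinarith [hw.1, hw.2]
  set a := Real.sqrt (1 - z ^ 2)
  set b := Real.sqrt (1 - w ^ 2)
  have hP : 0 < a * b + 1 - z * w := by
    nlinarith [mul_nonneg (Real.sqrt_nonneg (1 - z ^ 2)) (Real.sqrt_nonneg (1 - w ^ 2)),
      hz.1, hz.2, hw.1, hw.2]
  have hPQ : (a * b + 1 - z * w) * (1 - z * w - a * b) = (z - w) ^ 2 := by
    nlinarith [Real.sq_sqrt (sub_nonneg.2 hz2), Real.sq_sqrt (sub_nonneg.2 hw2)]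
  have hQ : 1 - z * w - a * b = (z - w) ^ 2 / (a * b + 1 - z * w) := by
    rw [← hPQ, mul_div_cancel_left₀ _ hP.ne']
  rw [norm_Zmap_sub_conj_Zmap hz2 hw2, norm_Zmap_sub_Zmap hz2 hw2, hQ,
    ← Real.sqrt_div' _ (mul_nonneg zero_le_two (div_nonneg (sq_nonneg _) hP.le)),
    mul_div_mul_left _ _ two_ne_zero, div_div_eq_mul_div, ← sq, ← div_pow,
    Real.sqrt_sq_eq_abs, abs_div, abs_of_pos hP]

theorem defNLS_NDR_iff_circular_NDR_general (Γ : Set ℝ)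
    (hΓ : Γ ⊆ Set.Ioo (-1 : ℝ) 1) (u σ : ℝ → ℝ) :
    ∀ z ∈ Γ,
      ((∫ w in Γ,
          Real.log ((Real.sqrt (1 - z ^ 2) * Real.sqrt (1 - w ^ 2) + 1 - z * w) / |z - w|)
            * u w) + σ z * u z = Real.sqrt (1 - z ^ 2)
        ↔
       (∫ w in Γ,
          Real.log (‖Zmap z - (starRingEnd ℂ) (Zmap w)‖
            / ‖Zmap z - Zmap w‖) * u w) + σ z * u z = (Zmap z).im) := by
  intro z hz
  have hΓ_ae : ∀ᵐ w ∂volume.restrict Γ, w ∈ Set.Ioo (-1 : ℝ) 1 :=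
    ae_restrict_of_ae_restrict_of_subset hΓ (ae_restrict_mem measurableSet_Ioo)
  have hkernel : (fun w => Real.log (‖Zmap z - (starRingEnd ℂ) (Zmap w)‖
      / ‖Zmap z - Zmap w‖) * u w) =ᵐ[volume.restrict Γ] fun w =>
      Real.log ((Real.sqrt (1 - z ^ 2) * Real.sqrt (1 - w ^ 2) + 1 - z * w) / |z - w|) * u w := by
    filter_upwards [hΓ_ae] with w hw
    rw [norm_Zmap_sub_conj_div_norm_Zmap_sub (hΓ hz) hw]
  rw [integral_congr_ae hkernel, Zmap_im]

/-- The first NDR for the defocusing NLS soliton gas supported on `Γ ⊆ (−1,1)` holds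
at `z ∈ Γ` if and only if the pulled-back first NDR for the circular focusing NLS
soliton gas holds at `z`. -/
theorem defNLS_NDR_iff_circular_NDR (Γ : Set ℝ) (hΓmeas : MeasurableSet Γ)
    (hΓ : Γ ⊆ Set.Ioo (-1 : ℝ) 1) (u σ : ℝ → ℝ)
    (hint : ∀ z ∈ Γ, IntegrableOn (fun w =>
      Real.log ((Real.sqrt (1 - z ^ 2) * Real.sqrt (1 - w ^ 2) + 1 - z * w) / |z - w|)
        * u w) Γ) :
    ∀ z ∈ Γ,
      ((∫ w in Γ,
          Real.log ((Real.sqrt (1 - z ^ 2) * Real.sqrt (1 - w ^ 2) + 1 - z * w) / |z - w|)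
            * u w) + σ z * u z = Real.sqrt (1 - z ^ 2)
        ↔
       (∫ w in Γ,
          Real.log (‖Zmap z - (starRingEnd ℂ) (Zmap w)‖
            / ‖Zmap z - Zmap w‖) * u w) + σ z * u z = (Zmap z).im) :=
  defNLS_NDR_iff_circular_NDR_general Γ hΓ u σ
end

section
/- Fix w ∈ (−1,1). For every z ∈ (−1,1) with z ≠ w, the function f(z) = log( (√(1−z²)·√(1−w²) + 1 − w·z) / |z−w| ) is differentiable at z with derivative f'(z) = √(1−w²) / ( √(1−z²)·(w − z) ). -/
/-! The absolute value in the denominator is invisible to `Real.log`, so the kernel is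
`log (N x / (x - w))` with `N x = √(1 - x²) √(1 - w²) + 1 - w x`. Its logarithmic derivative is
`N' / N - 1 / (z - w)`, and with `a = √(1 - z²)`, `b = √(1 - w²)` one has
`a (N' (z - w) - N) = -b N` by `a² = 1 - z²` and `b² = 1 - w²`, which collapses the derivative. -/

open Real

theorem Real.log_div_abs (a b : ℝ) : log (a / |b|) = log (a / b) := by
  rw [← log_abs, abs_div, abs_abs, ← abs_div, log_abs]

theorem hasDerivAt_log_div_abs_sub {f : ℝ → ℝ} {f' z : ℝ} (w : ℝ) (hf : HasDerivAt f f' z)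
    (hfz : f z ≠ 0) (hzw : z ≠ w) :
    HasDerivAt (fun x => log (f x / |x - w|)) (f' / f z - 1 / (z - w)) z := by
  have hzw' : z - w ≠ 0 := sub_ne_zero.mpr hzw
  simp only [Real.log_div_abs]
  convert (hf.fun_div ((hasDerivAt_id' z).sub_const w) hzw').log (div_ne_zero hfz hzw') using 1
  field_simp

theorem hasDerivAt_sqrt_one_sub_sq {z : ℝ} (hz : z ^ 2 < 1) :
    HasDerivAt (fun x => √(1 - x ^ 2)) (-z / √(1 - z ^ 2)) z := by
  convert ((hasDerivAt_pow 2 z).const_sub 1).sqrt (sub_pos.mpr hz).ne' using 1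
  ring

theorem one_sub_mul_pos_of_abs_lt {w x : ℝ} (hw : |w| < 1) (hx : |x| ≤ 1) : 0 < 1 - w * x := by
  have : |w * x| < 1 := by
    rw [abs_mul]
    nlinarith [abs_nonneg w, abs_nonneg x]
  linarith [le_abs_self (w * x)]

theorem defNLS_kernel_logDeriv_eq {a b z w : ℝ} (ha2 : a ^ 2 = 1 - z ^ 2) (hb2 : b ^ 2 = 1 - w ^ 2)
    (ha : a ≠ 0) (hN : a * b + 1 - w * z ≠ 0) (hzw : z ≠ w) :
    (-z / a * b - w) / (a * b + 1 - w * z) - 1 / (z - w) = b / (a * (w - z)) := by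
  have hzw' : z - w ≠ 0 := sub_ne_zero.mpr hzw
  have hwz : w - z ≠ 0 := sub_ne_zero.mpr hzw.symm
  rw [div_sub_div _ _ hN hzw', div_eq_div_iff (mul_ne_zero hN hzw') (mul_ne_zero ha hwz)]
  field_simp
  linear_combination b * (z - w) * ha2 + a * (w - z) * hb2

/-- Fix `w ∈ (−1,1)`. For every `z ∈ (−1,1)` with `z ≠ w`, the defNLS kernel
`f(z) = log((√(1−z²)√(1−w²) + 1 − wz)/|z−w|)` is differentiable at `z` with
derivative `√(1−w²)/(√(1−z²)(w−z))`. -/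
theorem defNLS_kernel_deriv (w : ℝ) (hw : w ∈ Set.Ioo (-1 : ℝ) 1)
    (z : ℝ) (hz : z ∈ Set.Ioo (-1 : ℝ) 1) (hzw : z ≠ w) :
    HasDerivAt (fun z : ℝ =>
        Real.log ((Real.sqrt (1 - z ^ 2) * Real.sqrt (1 - w ^ 2) + 1 - w * z) / |z - w|))
      (Real.sqrt (1 - w ^ 2) / (Real.sqrt (1 - z ^ 2) * (w - z))) z := by
  have hz2 : z ^ 2 < 1 := sq_lt_one_iff_abs_lt_one z |>.mpr (abs_lt.mpr hz)
  have hw2 : w ^ 2 < 1 := sq_lt_one_iff_abs_lt_one w |>.mpr (abs_lt.mpr hw)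
  set a := √(1 - z ^ 2)
  set b := √(1 - w ^ 2)
  have ha : 0 < a := sqrt_pos.mpr (sub_pos.mpr hz2)
  have hb : 0 < b := sqrt_pos.mpr (sub_pos.mpr hw2)
  have hN : 0 < a * b + 1 - w * z := by
    have := one_sub_mul_pos_of_abs_lt (abs_lt.mpr hw) (abs_lt.mpr hz).le
    nlinarith [mul_pos ha hb]
  have hN' : HasDerivAt (fun x => √(1 - x ^ 2) * b + 1 - w * x) (-z / a * b - w) z :=
    ((((hasDerivAt_sqrt_one_sub_sq hz2).mul_const b).add_const 1).fun_sub
      ((hasDerivAt_id' z).const_mul w)).congr_deriv (by ring)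
  rw [← defNLS_kernel_logDeriv_eq (sq_sqrt (sub_pos.mpr hz2).le) (sq_sqrt (sub_pos.mpr hw2).le)
    ha.ne' hN.ne' hzw]
  exact hasDerivAt_log_div_abs_sub w hN' hN.ne' hzw
end
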